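/- Let θ be a partial action of an inverse semigroupoid S on a set X. If (s,t) is a composable pair, then θ_s(X_{s*} ∩ X_t) = X_s ∩ X_{st}. -/

import Mathlib

structure InvSgpd (S : Type*) (O : Type*) where
  d : S → O
  c : S → O
  mul : S → S → S
  d_mul : ∀ s t, d s = c t → d (mul s t) = d t
  c_mul : ∀ s t, d s = c t → c (mul s t) = c s
  assoc : ∀ p s t, d p = c s → d s = c t → mul (mul p s) t = mul p (mul s t)
  inv : S → S
  comp_inv : ∀ s, d s = c (inv s)
  inv_comp : ∀ s, d (inv s) = c s
  mul_inv_mul : ∀ s, mul (mul s (inv s)) s = s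
  inv_mul_inv : ∀ s, mul (mul (inv s) s) (inv s) = inv s
  inv_unique : ∀ s t, d s = c t → d t = c s →
    mul (mul s t) s = s → mul (mul t s) t = t → t = inv s

namespace InvSgpd
variable {S O : Type*} (G : InvSgpd S O)
def Composable (s t : S) : Prop := G.d s = G.c t
def Idem (e : S) : Prop := G.Composable e e ∧ G.mul e e = e
def le (s t : S) : Prop :=
  G.d s = G.d t ∧ G.c s = G.c t ∧ s = G.mul t (G.mul (G.inv s) s)
end InvSgpd

/-- A partial action of an inverse semigroupoid `G` on a set (type) `X`:
`dom s` plays the role of `X_s` and `act s` the role of `θ_s : X_{s*} → X_s`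
(as a total map whose values are only relevant on `dom (G.inv s)`). -/
structure PAction {S O : Type*} (G : InvSgpd S O) (X : Type*) where
  dom : S → Set X
  act : S → X → X
  maps : ∀ s, ∀ x ∈ dom (G.inv s), act s x ∈ dom s
  /-- (P1) `θ_e = id_{X_e}` for idempotents. -/
  idem_id : ∀ e, G.Idem e → ∀ x ∈ dom e, act e x = x
  /-- (P1) every point lies in some `X_e` with `e` idempotent. -/
  cover : ∀ x : X, ∃ e, G.Idem e ∧ x ∈ dom e
  /-- (P2) `X_s ⊆ X_{ss*}`. -/
  dom_mono : ∀ s, dom s ⊆ dom (G.mul s (G.inv s))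
  /-- (P3) `θ_t⁻¹(X_t ∩ X_{s*}) = X_{(st)*} ∩ X_{t*}` for composable `(s,t)`. -/
  preimage_eq : ∀ s t, G.Composable s t →
    {x | x ∈ dom (G.inv t) ∧ act t x ∈ dom t ∩ dom (G.inv s)}
      = dom (G.inv (G.mul s t)) ∩ dom (G.inv t)
  /-- (P3) `θ_s (θ_t x) = θ_{st} x` on `X_{(st)*} ∩ X_{t*}`. -/
  mul_act : ∀ s t, G.Composable s t →
    ∀ x ∈ dom (G.inv (G.mul s t)) ∩ dom (G.inv t),
      act s (act t x) = act (G.mul s t) x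

namespace PAction
variable {S O X : Type*} {G : InvSgpd S O}

/-- A partial action is global when `X_s = X_{ss*}` for every `s`. -/
def IsGlobal (θ : PAction G X) : Prop := ∀ s, θ.dom s = θ.dom (G.mul s (G.inv s))

end PAction

/-!
The inclusion `⊆` is (P3) for `(s, t)`, after writing a point of `X_t` as `θ_t z` with
`z ∈ X_{t*}`. The inclusion `⊇` is (P3) for `(t*, s*)`, which needs `(t*s*)* = st`.
That identity holds in every inverse semigroupoid: `t*s*` is an inverse of `st` once the
idempotents `tt*` and `s*s` commute, and idempotents at one object commute because they live
in the isotropy semigroup at that object, an inverse semigroup.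
-/

structure IsUniqueInverse {M : Type*} [Semigroup M] (i : M → M) : Prop where
  mul_inv_mul : ∀ a, a * i a * a = a
  inv_mul_inv : ∀ a, i a * a * i a = i a
  eq_inv : ∀ a b, a * b * a = a → b * a * b = b → b = i a

namespace IsUniqueInverse
variable {M : Type*} [Semigroup M] {i : M → M} {e f : M}

lemma eq_inv_of_isIdempotentElem (hi : IsUniqueInverse i) (he : IsIdempotentElem e) :
    e = i e :=
  hi.eq_inv e e (by rw [he.eq, he.eq]) (by rw [he.eq, he.eq])

lemma isIdempotentElem_mul (hi : IsUniqueInverse i) (he : IsIdempotentElem e)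
    (hf : IsIdempotentElem f) : IsIdempotentElem (e * f) := by
  set x := i (e * f)
  have hx : e * (f * (x * (e * f))) = e * f := by
    simpa only [mul_assoc] using hi.mul_inv_mul (e * f)
  have hx' : ∀ y, x * (e * (f * (x * y))) = x * y := fun y => by
    simpa only [mul_assoc] using congrArg (· * y) (hi.inv_mul_inv (e * f))
  -- `f * x * e` is another inverse of `e * f`, hence equals `x`; so `x` is idempotent.
  have hfxe : f * (x * e) = x := by
    refine hi.eq_inv _ _ ?_ ?_ <;>
      simp only [mul_assoc, hf.mul_self_mul, he.mul_self_mul, hx, hx']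
  have hxx : IsIdempotentElem x := by
    rw [IsIdempotentElem, ← hfxe]; simp only [mul_assoc, hx']
  have hefx : e * f = i x :=
    hi.eq_inv x (e * f) (hi.inv_mul_inv (e * f)) (hi.mul_inv_mul (e * f))
  rwa [hefx, ← hi.eq_inv_of_isIdempotentElem hxx]

lemma commute_of_isIdempotentElem (hi : IsUniqueInverse i) (he : IsIdempotentElem e)
    (hf : IsIdempotentElem f) : Commute e f := by
  have hef := hi.isIdempotentElem_mul he hf
  have hfe := hi.isIdempotentElem_mul hf he
  have h1 : f * e = i (e * f) := by
    refine hi.eq_inv _ _ ?_ ?_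
    · simpa only [mul_assoc, hf.mul_self_mul, he.mul_self_mul] using hef.eq
    · simpa only [mul_assoc, hf.mul_self_mul, he.mul_self_mul] using hfe.eq
  show e * f = f * e
  rw [h1]; exact hi.eq_inv_of_isIdempotentElem hef

end IsUniqueInverse

namespace InvSgpd
variable {S O : Type*} (G : InvSgpd S O)

lemma c_inv (s : S) : G.c (G.inv s) = G.d s := (G.comp_inv s).symm

lemma composable_inv {s t : S} (h : G.Composable s t) : G.Composable (G.inv t) (G.inv s) := by
  rw [Composable, G.inv_comp, G.c_inv, h]

lemma inv_inv (s : S) : G.inv (G.inv s) = s :=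
  (G.inv_unique (G.inv s) s (G.inv_comp s) (G.comp_inv s) (G.inv_mul_inv s)
    (G.mul_inv_mul s)).symm

lemma idem_mul_inv (s : S) : G.Idem (G.mul s (G.inv s)) := by
  have hs := G.comp_inv s
  refine ⟨?_, ?_⟩
  · show G.d _ = G.c _
    rw [G.d_mul _ _ hs, G.c_mul _ _ hs, G.inv_comp]
  · rw [← G.assoc _ s _ (by rw [G.d_mul _ _ hs, G.inv_comp]) hs, G.mul_inv_mul]

lemma idem_inv_mul (s : S) : G.Idem (G.mul (G.inv s) s) := by
  simpa only [G.inv_inv] using G.idem_mul_inv (G.inv s)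

lemma inv_eq_self_of_idem {e : S} (he : G.Idem e) : G.inv e = e :=
  (G.inv_unique e e he.1 he.1 (by rw [he.2, he.2]) (by rw [he.2, he.2])).symm

def Isotropy (o : O) : Type _ := {s : S // G.d s = o ∧ G.c s = o}

instance (o : O) : Semigroup (G.Isotropy o) where
  mul a b := ⟨G.mul a.1 b.1, by
    have hab : G.d a.1 = G.c b.1 := by rw [a.2.1, b.2.2]
    rw [G.d_mul _ _ hab, G.c_mul _ _ hab]
    exact ⟨b.2.1, a.2.2⟩⟩
  mul_assoc a b c := Subtype.ext
    (G.assoc a.1 b.1 c.1 (by rw [a.2.1, b.2.2]) (by rw [b.2.1, c.2.2]))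

instance (o : O) : Inv (G.Isotropy o) where
  inv a := ⟨G.inv a.1, by rw [G.inv_comp, G.c_inv]; exact ⟨a.2.2, a.2.1⟩⟩

lemma isUniqueInverse_isotropy (o : O) : IsUniqueInverse (Inv.inv : G.Isotropy o → _) where
  mul_inv_mul a := Subtype.ext (G.mul_inv_mul a.1)
  inv_mul_inv a := Subtype.ext (G.inv_mul_inv a.1)
  eq_inv a b hab hba := Subtype.ext <| G.inv_unique a.1 b.1 (by rw [a.2.1, b.2.2])
    (by rw [b.2.1, a.2.2]) (congrArg Subtype.val hab) (congrArg Subtype.val hba)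

lemma idem_comm {e f : S} (he : G.Idem e) (hf : G.Idem f) (hd : G.d e = G.d f) :
    G.mul e f = G.mul f e := by
  let e' : G.Isotropy (G.d e) := ⟨e, rfl, he.1.symm⟩
  let f' : G.Isotropy (G.d e) := ⟨f, hd.symm, by rw [hd]; exact hf.1.symm⟩
  exact congrArg Subtype.val <| ((G.isUniqueInverse_isotropy _).commute_of_isIdempotentElem
    (e := e') (f := f') (Subtype.ext he.2) (Subtype.ext hf.2)).eq

lemma mul_mul_inv_rev_mul {s t : S} (h : G.Composable s t) :
    G.mul (G.mul (G.mul s t) (G.mul (G.inv t) (G.inv s))) (G.mul s t) = G.mul s t := by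
  have h' : G.d s = G.c t := h
  calc _ = G.mul s (G.mul (G.mul (G.mul t (G.inv t)) (G.mul (G.inv s) s)) t) := by
        simp (disch := simp only [G.d_mul, G.c_mul, G.inv_comp, G.c_inv, h']) only [G.assoc]
    _ = G.mul s (G.mul (G.mul (G.mul (G.inv s) s) (G.mul t (G.inv t))) t) := by
        rw [G.idem_comm (G.idem_mul_inv t) (G.idem_inv_mul s)
          (by simp (disch := simp only [G.inv_comp, G.c_inv]) only [G.d_mul, G.inv_comp, h'])]
    _ = G.mul (G.mul (G.mul s (G.inv s)) s) (G.mul (G.mul t (G.inv t)) t) := by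
        simp (disch := simp only [G.d_mul, G.c_mul, G.inv_comp, G.c_inv, h']) only [G.assoc]
    _ = G.mul s t := by rw [G.mul_inv_mul, G.mul_inv_mul]

lemma mul_inv_rev {s t : S} (h : G.Composable s t) :
    G.inv (G.mul s t) = G.mul (G.inv t) (G.inv s) := by
  have h' : G.d s = G.c t := h
  have h_inv := G.composable_inv h
  refine (G.inv_unique _ _ ?_ ?_ (G.mul_mul_inv_rev_mul h) ?_).symm
  · rw [G.d_mul _ _ h', G.c_mul _ _ h_inv, G.c_inv]
  · rw [G.d_mul _ _ h_inv, G.c_mul _ _ h', G.inv_comp]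
  · simpa only [G.inv_inv] using G.mul_mul_inv_rev_mul h_inv

end InvSgpd

namespace PAction
variable {S O X : Type*} {G : InvSgpd S O} (θ : PAction G X) {s t : S} {x : X}

lemma act_inv_mem (hx : x ∈ θ.dom s) : θ.act (G.inv s) x ∈ θ.dom (G.inv s) :=
  θ.maps (G.inv s) x (by rwa [G.inv_inv])

lemma act_act_inv (hx : x ∈ θ.dom s) : θ.act s (θ.act (G.inv s) x) = x := by
  have hss := G.idem_mul_inv s
  have hx' : x ∈ θ.dom (G.inv (G.mul s (G.inv s))) ∩ θ.dom (G.inv (G.inv s)) := by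
    rw [G.inv_eq_self_of_idem hss, G.inv_inv]
    exact ⟨θ.dom_mono s hx, hx⟩
  rw [θ.mul_act s (G.inv s) (G.comp_inv s) x hx']
  exact θ.idem_id _ hss x (θ.dom_mono s hx)

lemma act_mem_dom_inv_iff (h : G.Composable s t) (hx : x ∈ θ.dom (G.inv t)) :
    θ.act t x ∈ θ.dom (G.inv s) ↔ x ∈ θ.dom (G.inv (G.mul s t)) := by
  simpa only [Set.mem_ofPred_eq, Set.mem_inter_iff, hx, θ.maps t x hx, true_and, and_true]
    using Set.ext_iff.1 (θ.preimage_eq s t h) x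

lemma image_inter_subset (h : G.Composable s t) :
    θ.act s '' (θ.dom (G.inv s) ∩ θ.dom t) ⊆ θ.dom s ∩ θ.dom (G.mul s t) := by
  rintro _ ⟨x, ⟨hxs, hxt⟩, rfl⟩
  have hz := θ.act_inv_mem hxt
  have hzst : θ.act (G.inv t) x ∈ θ.dom (G.inv (G.mul s t)) :=
    (θ.act_mem_dom_inv_iff h hz).1 (by rwa [θ.act_act_inv hxt])
  refine ⟨θ.maps s x hxs, ?_⟩
  rw [← θ.act_act_inv hxt, θ.mul_act s t h _ ⟨hzst, hz⟩]
  exact θ.maps _ _ hzst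

lemma inter_subset_image (h : G.Composable s t) :
    θ.dom s ∩ θ.dom (G.mul s t) ⊆ θ.act s '' (θ.dom (G.inv s) ∩ θ.dom t) := by
  rintro y ⟨hys, hyst⟩
  have h_inv := G.composable_inv h
  have hyt : θ.act (G.inv s) y ∈ θ.dom t := by
    have := (θ.act_mem_dom_inv_iff h_inv (by rwa [G.inv_inv])).2
    rw [G.mul_inv_rev h_inv, G.inv_inv, G.inv_inv] at this
    exact this hyst
  exact ⟨_, ⟨θ.act_inv_mem hys, hyt⟩, θ.act_act_inv hys⟩

end PAction

/-- For a composable pair `(s,t)`, `θ_s(X_{s*} ∩ X_t) = X_s ∩ X_{st}`. -/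
theorem act_image_inter {S O X : Type*} (G : InvSgpd S O) (θ : PAction G X)
    (s t : S) (h : G.Composable s t) :
    θ.act s '' (θ.dom (G.inv s) ∩ θ.dom t) = θ.dom s ∩ θ.dom (G.mul s t) :=
  (θ.image_inter_subset h).antisymm (θ.inter_subset_image h)
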